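/- Let E be a countably infinite set, let G be a P-oligomorphic group of permutations of E, and let Ker(G) = {x ∈ E | the G-orbit of x is finite} be the kernel of G. Then the collection of G-invariant setoids on E each of whose equivalence classes is either infinite or contained in Ker(G) is a finite set; it is closed under the lattice operations ⊓ and ⊔ of Setoid E, contains the top setoid as its greatest element, and possesses a least element. -/

import Mathlib

/-- The orbit setoid of a permutation group `G ≤ Perm E` acting on the
`n`-element finite subsets of `E`. -/
def permSetoid {E : Type*} (G : Subgroup (Equiv.Perm E)) (n : ℕ) :
    Setoid {s : Set E // s.Finite ∧ s.ncard = n} where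
  r s t := ∃ g ∈ G, g '' s.1 = t.1
  iseqv := by
    constructor
    · exact fun s => ⟨1, G.one_mem, by simp⟩
    · rintro s t ⟨g, hg, h⟩
      refine ⟨g⁻¹, G.inv_mem hg, ?_⟩
      rw [← h, ← Set.image_comp]
      ext x; simp
    · rintro s t u ⟨g, hg, h⟩ ⟨g', hg', h'⟩
      refine ⟨g' * g, G.mul_mem hg' hg, ?_⟩
      rw [← h', ← h, ← Set.image_comp]
      ext x; simp

/-- A setoid (equivalence relation) on `E` is `G`-invariant — i.e. a block
system for `G` — if its relation is preserved by every element of `G`. -/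
def GInvariant {E : Type*} (G : Subgroup (Equiv.Perm E)) (r : Setoid E) : Prop :=
  ∀ g ∈ G, ∀ x y : E, r.r x y ↔ r.r (g x) (g y)

/-- The profile of a permutation group: the number of orbits of `n`-element
finite subsets. -/
noncomputable def profile {E : Type*} (G : Subgroup (Equiv.Perm E)) (n : ℕ) : ℕ :=
  Nat.card (Quotient (permSetoid G n))

/-- The kernel of a permutation group `G ≤ Perm E`: the set of elements of `E`
whose `G`-orbit is finite. -/
def permKernel {E : Type*} (G : Subgroup (Equiv.Perm E)) : Set E :=
  {x | {y | ∃ g ∈ G, g x = y}.Finite}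

/-- The collection of `G`-invariant setoids on `E` each of whose classes is
infinite or contained in the kernel of `G`. -/
def infiniteBlockSystems {E : Type*} (G : Subgroup (Equiv.Perm E)) : Set (Setoid E) :=
  {r | GInvariant G r ∧
    ∀ x : E, {y | r.r x y}.Infinite ∨ {y | r.r x y} ⊆ permKernel G}


/-!
A `G`-invariant setoid is determined by the set of orbits of `2`-subsets whose two points it
relates, so there are only finitely many of them. Coarsening an invariant setoid keeps every
block infinite or inside the kernel, which gives closure under `⊔`.

The substance is closure under `⊓`. The nonzero sizes of the intersections of a finite set with
the blocks of an invariant setoid `u` form an orbit invariant; if `u` had `k + 2` infinite blocks,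
prescribing these sizes in disjoint intervals would produce `M ^ (k + 1)` orbits of sets of size
`O(k² M)`, beating any bound `c (n + 1) ^ k`. So `u` has finitely many infinite blocks. If the
`r`- and `s`-blocks of `x` are infinite while its `r ⊓ s`-block is finite, every point of the
orbit of a point `z` of that block lies in one of finitely many infinite `r`-blocks and `s`-blocks,
and two such blocks meet in a finite `r ⊓ s`-block: the orbit of `z` is finite.
-/

open Set

section

variable {E : Type*} {G : Subgroup (Equiv.Perm E)}

namespace Setoid

def blockOf (r : Setoid E) (x : E) : Set E := {y | r x y}

lemma mem_blockOf_self (r : Setoid E) (x : E) : x ∈ r.blockOf x := r.refl x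

lemma blockOf_eq_of_rel {r : Setoid E} {x y : E} (h : r x y) : r.blockOf x = r.blockOf y :=
  Set.ext fun _ => ⟨r.trans (r.symm h), r.trans h⟩

lemma blockOf_eq_of_mem_of_mem {r : Setoid E} {x y w : E} (hx : w ∈ r.blockOf x)
    (hy : w ∈ r.blockOf y) : r.blockOf x = r.blockOf y :=
  (blockOf_eq_of_rel hx).trans (blockOf_eq_of_rel hy).symm

lemma blockOf_mono {r s : Setoid E} (h : r ≤ s) (x : E) : r.blockOf x ⊆ s.blockOf x :=
  fun _ hy => h hy

lemma finite_of_finite_blocks {r s : Setoid E} {O : Set E} (hr : (r.blockOf '' O).Finite)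
    (hs : (s.blockOf '' O).Finite) (hO : ∀ w ∈ O, ((r ⊓ s).blockOf w).Finite) : O.Finite := by
  refine Finite.of_finite_fibers (fun w => (r.blockOf w, s.blockOf w)) ?_ ?_
  · refine (hr.prod hs).subset ?_
    rintro _ ⟨w, hw, rfl⟩
    exact ⟨mem_image_of_mem _ hw, mem_image_of_mem _ hw⟩
  · rintro _ ⟨w, hw, rfl⟩
    refine (hO w hw).subset fun v ⟨_, hv⟩ => ?_
    simp only [mem_preimage, mem_singleton_iff, Prod.mk.injEq] at hv
    exact ⟨(hv.1 ▸ r.mem_blockOf_self v : v ∈ r.blockOf w),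
      (hv.2 ▸ s.mem_blockOf_self v : v ∈ s.blockOf w)⟩

end Setoid

namespace GInvariant

variable {r s u : Setoid E}

lemma iff_le_comap : GInvariant G r ↔ ∀ g ∈ G, r ≤ r.comap g := by
  refine ⟨fun h g hg x y => (h g hg x y).1,
    fun h g hg x y => ⟨fun hxy => h g hg hxy, fun hxy => ?_⟩⟩
  simpa [Setoid.comap_rel] using h g⁻¹ (G.inv_mem hg) hxy

lemma inf (hr : GInvariant G r) (hs : GInvariant G s) : GInvariant G (r ⊓ s) :=
  fun g hg x y => and_congr (hr g hg x y) (hs g hg x y)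

lemma sup (hr : GInvariant G r) (hs : GInvariant G s) : GInvariant G (r ⊔ s) :=
  iff_le_comap.2 fun g hg => sup_le
    ((iff_le_comap.1 hr g hg).trans fun _ _ h => (le_sup_left : r ≤ r ⊔ s) h)
    ((iff_le_comap.1 hs g hg).trans fun _ _ h => (le_sup_right : s ≤ r ⊔ s) h)

lemma image_blockOf (hu : GInvariant G u) {g : Equiv.Perm E} (hg : g ∈ G) (x : E) :
    g '' u.blockOf x = u.blockOf (g x) := by
  ext z
  rw [Equiv.image_eq_preimage_symm]
  simpa [Setoid.blockOf] using hu g hg x (g.symm z)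

lemma infinite_blockOf_apply_iff (hu : GInvariant G u) {g : Equiv.Perm E} (hg : g ∈ G) (x : E) :
    (u.blockOf (g x)).Infinite ↔ (u.blockOf x).Infinite := by
  rw [← hu.image_blockOf hg, infinite_image_iff g.injective.injOn]

end GInvariant

variable (G) in
def pairOrbit {x y : E} (h : x ≠ y) : Quotient (permSetoid G 2) :=
  ⟦⟨{x, y}, (finite_singleton y).insert x, ncard_pair h⟩⟧

variable (G) in
def pairOrbits (r : Setoid E) : Set (Quotient (permSetoid G 2)) :=
  {q | ∃ (x y : E) (h : x ≠ y), r x y ∧ pairOrbit G h = q}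

lemma GInvariant.rel_of_pairOrbit_eq {r : Setoid E} (hr : GInvariant G r) {x y x' y' : E}
    {h : x ≠ y} {h' : x' ≠ y'} (he : pairOrbit G h = pairOrbit G h') (hxy : r x' y') :
    r x y := by
  obtain ⟨g, hg, himg⟩ := Quotient.exact he
  have hpair : ({g x, g y} : Set E) = {x', y'} := by
    rw [← image_pair]
    exact himg
  refine (hr g hg x y).2 ?_
  rcases pair_eq_pair_iff.1 hpair with ⟨hx, hy⟩ | ⟨hx, hy⟩
  · rwa [hx, hy]
  · rw [hx, hy]
    exact r.symm hxy

lemma GInvariant.le_of_pairOrbits_subset {r s : Setoid E} (hs : GInvariant G s)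
    (h : pairOrbits G r ⊆ pairOrbits G s) : r ≤ s := by
  intro x y hxy
  by_cases hne : x = y
  · exact hne ▸ s.refl x
  · obtain ⟨x', y', h', hs', he⟩ := h ⟨x, y, hne, hxy, rfl⟩
    exact hs.rel_of_pairOrbit_eq he.symm hs'

lemma finite_setOf_gInvariant [Finite (Quotient (permSetoid G 2))] :
    {r : Setoid E | GInvariant G r}.Finite :=
  Finite.of_finite_image (toFinite _) fun _ hr _ hs he =>
    le_antisymm (GInvariant.le_of_pairOrbits_subset hs he.le)
      (GInvariant.le_of_pairOrbits_subset hr he.ge)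

def Setoid.blockIntersectionSizes (u : Setoid E) (S : Set E) : Set ℕ :=
  range (fun x => (S ∩ u.blockOf x).ncard) \ {0}

lemma GInvariant.blockIntersectionSizes_image {u : Setoid E} (hu : GInvariant G u)
    {g : Equiv.Perm E} (hg : g ∈ G) (S : Set E) :
    u.blockIntersectionSizes (g '' S) = u.blockIntersectionSizes S := by
  unfold Setoid.blockIntersectionSizes
  rw [← g.surjective.range_comp]
  congr 2
  funext x
  simp only [Function.comp_apply, ← hu.image_blockOf hg, ← image_inter g.injective,
    ncard_image_of_injective _ g.injective]

lemma card_le_profile {ι α : Type*} {n : ℕ} [Finite (Quotient (permSetoid G n))]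
    (f : Set E → α) (hf : ∀ g ∈ G, ∀ S, f (g '' S) = f S) (S : ι → Finset E)
    (hS : ∀ i, (S i).card = n) (hinj : Function.Injective fun i => f (S i)) :
    Nat.card ι ≤ profile G n := by
  refine Nat.card_le_card_of_injective
    (fun i => ⟦⟨S i, (S i).finite_toSet, by rw [ncard_coe_finset, hS]⟩⟧)
    fun i j hij => hinj ?_
  obtain ⟨g, hg, himg⟩ := Quotient.exact hij
  simp only at himg ⊢
  rw [← himg, hf g hg]

lemma exists_finset_blockIntersectionSizes {ι : Type*} [Fintype ι] {u : Setoid E} (x : ι → E)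
    (hx : Pairwise fun i j => ¬ u (x i) (x j)) (hinf : ∀ i, (u.blockOf (x i)).Infinite)
    (b : ι → ℕ) (hb : ∀ i, 0 < b i) :
    ∃ S : Finset E, S.card = ∑ i, b i ∧ u.blockIntersectionSizes S = range b := by
  classical
  choose T hTsub hTcard using fun i => (hinf i).exists_subset_card_eq (b i)
  have hdisj : ∀ i j w, w ∈ u.blockOf (x i) → w ∈ u.blockOf (x j) → i = j :=
    fun i j w hi hj => by_contra fun hij => hx hij (u.trans hi (u.symm hj))
  have hinter : ∀ i, (↑(Finset.univ.biUnion T) : Set E) ∩ u.blockOf (x i) = T i := by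
    intro i
    ext w
    simp only [Finset.coe_biUnion, Finset.coe_univ, mem_univ, iUnion_true, mem_inter_iff,
      mem_iUnion, Finset.mem_coe]
    refine ⟨fun ⟨⟨j, hj⟩, hw⟩ => ?_, fun hw => ⟨⟨i, hw⟩, hTsub i hw⟩⟩
    rwa [hdisj i j w hw (hTsub j hj)]
  refine ⟨Finset.univ.biUnion T, ?_, ?_⟩
  · rw [Finset.card_biUnion fun i _ j _ hij => Finset.disjoint_left.2 fun w hi hj =>
      hij (hdisj i j w (hTsub i hi) (hTsub j hj))]
    simp only [hTcard]
  · ext m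
    simp only [Setoid.blockIntersectionSizes, mem_sdiff, mem_range, mem_singleton_iff]
    constructor
    · rintro ⟨⟨z, rfl⟩, hz⟩
      obtain ⟨w, hwS, hwz⟩ := nonempty_of_ncard_ne_zero hz
      obtain ⟨i, -, hwi⟩ := Finset.mem_biUnion.1 hwS
      refine ⟨i, ?_⟩
      rw [Setoid.blockOf_eq_of_mem_of_mem hwz (hTsub i hwi), hinter, ncard_coe_finset, hTcard]
    · rintro ⟨i, rfl⟩
      exact ⟨⟨x i, by rw [hinter, ncard_coe_finset, hTcard]⟩, (hb i).ne'⟩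

section Coding

variable {k M : ℕ}

def codePart (v : Fin (k + 1) → Fin M) (i : Fin (k + 1)) : ℕ := i * M + v i + 1

/-- The parts `i * M + v i + 1` lie in the disjoint intervals `(i * M, (i + 1) * M]`, so their set
determines `v`; the last part, larger than all of them, pads the total to `n`. -/
def codeSizes (n : ℕ) (v : Fin (k + 1) → Fin M) : Fin (k + 2) → ℕ :=
  Fin.snoc (α := fun _ => ℕ) (codePart v) (n - ∑ i, codePart v i)

lemma codePart_le (v : Fin (k + 1) → Fin M) (i : Fin (k + 1)) : codePart v i ≤ (k + 1) * M := by
  have hi : (i : ℕ) + 1 ≤ k + 1 := i.isLt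
  have hv : (v i : ℕ) < M := (v i).isLt
  calc codePart v i ≤ (i + 1) * M := by rw [codePart, add_one_mul]; omega
    _ ≤ (k + 1) * M := Nat.mul_le_mul_right M hi

lemma codePart_inj {v v' : Fin (k + 1) → Fin M} {i j : Fin (k + 1)}
    (h : codePart v i = codePart v' j) : i = j ∧ v i = v' j := by
  have hM : 0 < M := (v i).pos
  have hdiv : ∀ (l : ℕ) (a : Fin M), (l * M + a) / M = l := fun l a => by
    rw [add_comm, Nat.add_mul_div_right _ _ hM, Nat.div_eq_of_lt a.isLt, zero_add]
  have h' : (i : ℕ) * M + v i = j * M + v' j := by simpa [codePart] using h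
  have hij : i = j := Fin.ext (by rw [← hdiv i (v i), ← hdiv j (v' j), h'])
  subst hij
  exact ⟨rfl, Fin.ext (Nat.add_left_cancel h')⟩

lemma sum_codePart_le (v : Fin (k + 1) → Fin M) :
    ∑ i, codePart v i ≤ (k + 1) * ((k + 1) * M) :=
  calc ∑ i, codePart v i ≤ ∑ _i : Fin (k + 1), (k + 1) * M :=
        Finset.sum_le_sum fun i _ => codePart_le v i
    _ = (k + 1) * ((k + 1) * M) := by simp

variable {n : ℕ} (hn : (k + 2) * ((k + 1) * M) < n)
include hn

lemma codePart_lt_codeSizes_last (v v' : Fin (k + 1) → Fin M) (i : Fin (k + 1)) :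
    codePart v i < codeSizes n v' (Fin.last _) := by
  have := codePart_le v i
  have := sum_codePart_le v'
  have hsplit : (k + 2) * ((k + 1) * M) = (k + 1) * ((k + 1) * M) + (k + 1) * M := by ring
  simp only [codeSizes, Fin.snoc_last]
  omega

lemma sum_codeSizes (v : Fin (k + 1) → Fin M) : ∑ j, codeSizes n v j = n := by
  have := codePart_lt_codeSizes_last hn v v 0
  simp only [codeSizes, Fin.sum_univ_castSucc, Fin.snoc_castSucc, Fin.snoc_last] at this ⊢
  omega

lemma codeSizes_pos (v : Fin (k + 1) → Fin M) (j : Fin (k + 2)) : 0 < codeSizes n v j := by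
  induction j using Fin.lastCases with
  | last => exact (Nat.zero_le _).trans_lt (codePart_lt_codeSizes_last hn v v 0)
  | cast i => simp [codeSizes, codePart]

lemma range_codeSizes_injective :
    Function.Injective fun v : Fin (k + 1) → Fin M => range (codeSizes n v) := by
  intro v v' h
  funext i
  have hmem : codePart v i ∈ range (codeSizes n v') := by
    rw [← show range (codeSizes n v) = range (codeSizes n v') from h]
    exact ⟨i.castSucc, by simp [codeSizes]⟩
  simp only [codeSizes, Fin.range_snoc, mem_insert_iff, mem_range] at hmem
  rcases hmem with hlast | ⟨j, hj⟩
  · have := codePart_lt_codeSizes_last hn v v' i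
    simp only [codeSizes, Fin.snoc_last] at this
    omega
  · obtain ⟨rfl, hv⟩ := codePart_inj hj
    exact hv.symm

end Coding

lemma GInvariant.exists_lt_profile (holig : ∀ n, Finite (Quotient (permSetoid G n)))
    {u : Setoid E} (hu : GInvariant G u) (x : ℕ → E) (hx : Pairwise fun i j => ¬ u (x i) (x j))
    (hinf : ∀ i, (u.blockOf (x i)).Infinite) (c k : ℕ) :
    ∃ n, c * (n + 1) ^ k < profile G n := by
  set M := c * ((k + 2) ^ 2) ^ k + 1
  set n := (k + 2) ^ 2 * M - 1
  have hM : 1 ≤ M := Nat.le_add_left 1 _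
  have hsplit : (k + 2) ^ 2 * M = (k + 2) * ((k + 1) * M) + (k + 2) * M := by ring
  have hn : (k + 2) * ((k + 1) * M) < n := by
    have : 2 ≤ (k + 2) * M := le_mul_of_le_of_one_le (Nat.le_add_left 2 k) hM
    omega
  choose S hScard hSsizes using fun v : Fin (k + 1) → Fin M =>
    exists_finset_blockIntersectionSizes (fun j : Fin (k + 2) => x j)
      (fun _ _ hij => hx (Fin.val_injective.ne hij)) (fun j => hinf j) (codeSizes n v)
      (codeSizes_pos hn v)
  have := holig n
  have hprofile : M ^ (k + 1) ≤ profile G n := by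
    simpa using card_le_profile u.blockIntersectionSizes
      (fun _ hg S => hu.blockIntersectionSizes_image hg S) S
      (fun v => (hScard v).trans (sum_codeSizes hn v))
      (by simpa only [hSsizes] using range_codeSizes_injective hn)
  refine ⟨n, ?_⟩
  calc c * (n + 1) ^ k = c * ((k + 2) ^ 2) ^ k * M ^ k := by
        rw [show n + 1 = (k + 2) ^ 2 * M by omega, mul_pow, mul_assoc]
    _ < M * M ^ k := Nat.mul_lt_mul_of_pos_right (Nat.lt_succ_self _) (by positivity)
    _ = M ^ (k + 1) := (pow_succ' M k).symm
    _ ≤ profile G n := hprofile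

lemma GInvariant.finite_image_blockOf_infinite (holig : ∀ n, Finite (Quotient (permSetoid G n)))
    {c k : ℕ} (hpoly : ∀ n, profile G n ≤ c * (n + 1) ^ k) {u : Setoid E}
    (hu : GInvariant G u) :
    (u.blockOf '' {x | (u.blockOf x).Infinite}).Finite := by
  by_contra h
  let e := Set.Infinite.natEmbedding _ h
  choose x hx hex using fun i => (e i).2
  have hdisj : Pairwise fun i j => ¬ u (x i) (x j) := fun i j hij hrel =>
    hij (e.injective (Subtype.ext (by rw [← hex i, ← hex j, Setoid.blockOf_eq_of_rel hrel])))
  obtain ⟨n, hn⟩ := hu.exists_lt_profile holig x hdisj hx c k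
  exact (hpoly n).not_gt hn

lemma inf_mem_infiniteBlockSystems (holig : ∀ n, Finite (Quotient (permSetoid G n)))
    {c k : ℕ} (hpoly : ∀ n, profile G n ≤ c * (n + 1) ^ k) {r s : Setoid E}
    (hr : r ∈ infiniteBlockSystems G) (hs : s ∈ infiniteBlockSystems G) :
    r ⊓ s ∈ infiniteBlockSystems G := by
  refine ⟨hr.1.inf hs.1, fun x => ?_⟩
  rcases hr.2 x with hrx | hrx
  swap
  · exact Or.inr fun y hy => hrx hy.1
  rcases hs.2 x with hsx | hsx
  swap
  · exact Or.inr fun y hy => hsx hy.2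
  refine or_iff_not_imp_left.2 fun hfin z hz => ?_
  show {y | ∃ g ∈ G, g z = y}.Finite
  have horbit : ∀ t : Setoid E, GInvariant G t → t x z → ∀ w ∈ {y | ∃ g ∈ G, g z = y},
      ((t.blockOf w).Infinite ↔ (t.blockOf x).Infinite) := by
    rintro t ht hxz _ ⟨g, hg, rfl⟩
    rw [ht.infinite_blockOf_apply_iff hg, Setoid.blockOf_eq_of_rel hxz]
  refine Setoid.finite_of_finite_blocks (r := r) (s := s)
    ((hr.1.finite_image_blockOf_infinite holig hpoly).subset
      (image_mono fun w hw => (horbit r hr.1 hz.1 w hw).2 hrx))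
    ((hs.1.finite_image_blockOf_infinite holig hpoly).subset
      (image_mono fun w hw => (horbit s hs.1 hz.2 w hw).2 hsx))
    fun w hw => not_infinite.1 fun h => hfin ((horbit _ (hr.1.inf hs.1) hz w hw).1 h)

lemma mem_infiniteBlockSystems_of_le {r t : Setoid E} (hr : r ∈ infiniteBlockSystems G)
    (ht : GInvariant G t) (hle : r ≤ t) : t ∈ infiniteBlockSystems G :=
  ⟨ht, fun _ => or_iff_not_imp_left.2 fun hfin y hy => (hr.2 y).resolve_left
    (fun hinf => hfin (hinf.mono ((Setoid.blockOf_mono hle y).trans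
      (Setoid.blockOf_eq_of_rel hy).ge))) (r.mem_blockOf_self y)⟩

lemma sup_mem_infiniteBlockSystems {r s : Setoid E} (hr : r ∈ infiniteBlockSystems G)
    (hs : s ∈ infiniteBlockSystems G) : r ⊔ s ∈ infiniteBlockSystems G :=
  mem_infiniteBlockSystems_of_le hr (hr.1.sup hs.1) le_sup_left

lemma top_mem_infiniteBlockSystems [Infinite E] : (⊤ : Setoid E) ∈ infiniteBlockSystems G :=
  ⟨fun _ _ _ _ => iff_of_true trivial trivial,
    fun _ => Or.inl (infinite_univ.mono fun _ _ => trivial)⟩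

end

theorem infiniteBlockSystems_lattice_general {E : Type*} [Infinite E]
    (G : Subgroup (Equiv.Perm E))
    (holig : ∀ n, Finite (Quotient (permSetoid G n)))
    (hpoly : ∃ c k : ℕ, ∀ n, profile G n ≤ c * (n + 1) ^ k) :
    (infiniteBlockSystems G).Finite ∧
      (∀ r ∈ infiniteBlockSystems G, ∀ s ∈ infiniteBlockSystems G,
        r ⊓ s ∈ infiniteBlockSystems G ∧ r ⊔ s ∈ infiniteBlockSystems G) ∧
      (⊤ : Setoid E) ∈ infiniteBlockSystems G ∧
      (∀ r ∈ infiniteBlockSystems G, r ≤ (⊤ : Setoid E)) ∧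
      (∃ m ∈ infiniteBlockSystems G, ∀ r ∈ infiniteBlockSystems G, m ≤ r) := by
  obtain ⟨c, k, hpoly⟩ := hpoly
  have := holig 2
  have hfin : (infiniteBlockSystems G).Finite := finite_setOf_gInvariant.subset fun _ hr => hr.1
  have hinf : InfClosed (infiniteBlockSystems G) := fun _ hr _ hs =>
    inf_mem_infiniteBlockSystems holig hpoly hr hs
  refine ⟨hfin, fun r hr s hs => ⟨hinf hr hs, sup_mem_infiniteBlockSystems hr hs⟩,
    top_mem_infiniteBlockSystems, fun _ _ => le_top, ?_⟩
  have hne : hfin.toFinset.Nonempty := ⟨⊤, hfin.mem_toFinset.2 top_mem_infiniteBlockSystems⟩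
  exact ⟨hfin.toFinset.inf' hne id, hinf.finsetInf'_mem hne fun _ hr => hfin.mem_toFinset.1 hr,
    fun _ hr => Finset.inf'_le id (hfin.mem_toFinset.2 hr)⟩

/-- For a P-oligomorphic group `G` of permutations of a countably infinite set
`E`, the collection of `G`-invariant setoids whose classes are infinite or
contained in the kernel is finite, closed under `⊓` and `⊔`, contains `⊤` as
its greatest element, and has a least element. -/
theorem infiniteBlockSystems_lattice {E : Type*} [Countable E] [Infinite E]
    (G : Subgroup (Equiv.Perm E))
    (holig : ∀ n, Finite (Quotient (permSetoid G n)))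
    (hpoly : ∃ c k : ℕ, ∀ n, profile G n ≤ c * (n + 1) ^ k) :
    (infiniteBlockSystems G).Finite ∧
      (∀ r ∈ infiniteBlockSystems G, ∀ s ∈ infiniteBlockSystems G,
        r ⊓ s ∈ infiniteBlockSystems G ∧ r ⊔ s ∈ infiniteBlockSystems G) ∧
      (⊤ : Setoid E) ∈ infiniteBlockSystems G ∧
      (∀ r ∈ infiniteBlockSystems G, r ≤ (⊤ : Setoid E)) ∧
      (∃ m ∈ infiniteBlockSystems G, ∀ r ∈ infiniteBlockSystems G, m ≤ r) :=
  infiniteBlockSystems_lattice_general G holig hpoly
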